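/- arXiv:1001.3226 — 2 statements merged into one kernel-verified Lean document; each statement's English description precedes it below -/
import Mathlib

section
/- In the polynomial ring F_q[V_1, …, V_{h−1}, z_1, …, z_{h−1}], let Q_1 be the matrix M(B_1, …, B_{h−1}) with its first row replaced by (z_1B_1, z_2B_2, …, z_{h−1}B_{h−1}, 0), and let Q_2 be the matrix M(V_1, …, V_{h−1}) with its h-th column replaced by the column whose first entry is 0 and whose i-th entry is z_{i−1}V_{h−i+1}^{q^{i−1}} for 2 ≤ i ≤ h. Then det Q_1 = det Q_2 = (−1)^{h−1} Σ_{i=1}^{h−1} z_i B_i V_{h−i}^{q^i}. -/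
open Finset

noncomputable section

/-- The `(a,b)` entry (0-based) of the matrix `M(W)`, whose 1-based `(i,j)` entry is
`W_{j−i+1}^{q^{i−1}}`, with the convention that entries with negative index vanish. -/
def entryM (q : ℕ) {R : Type*} [CommRing R] (W : ℕ → R) (a b : ℕ) : R :=
  if a ≤ b + 1 then W (b + 1 - a) ^ q ^ a else 0

/-- `δ_i(W) := (−1)^i` times the determinant of the top-left `i×i` submatrix of `M(W)`. -/
def deltaM (q : ℕ) {R : Type*} [CommRing R] (W : ℕ → R) (i : ℕ) : R :=
  (-1) ^ i * Matrix.det (Matrix.of fun a b : Fin i => entryM q W a b)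

/-- The variable `V_j` in `F_q[V₁, …, V_{h−1}, z₁, …, z_{h−1}]`. -/
def vVar (K : Type*) [Field K] (j : ℕ) : MvPolynomial (ℕ ⊕ ℕ) K :=
  MvPolynomial.X (Sum.inl j)

/-- The variable `z_j` in `F_q[V₁, …, V_{h−1}, z₁, …, z_{h−1}]`. -/
def zVar (K : Type*) [Field K] (j : ℕ) : MvPolynomial (ℕ ⊕ ℕ) K :=
  MvPolynomial.X (Sum.inr j)

/-- The tuple `(V₁, …, V_{h−1})`, extended by `V₀ = 1` and `V_j = 0` for `j ≥ h`. -/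
def vTuple (K : Type*) [Field K] (h : ℕ) : ℕ → MvPolynomial (ℕ ⊕ ℕ) K := fun j =>
  if j = 0 then 1 else if j ≤ h - 1 then vVar K j else 0

/-- The tuple `(B₁, …, B_{h−1})`, where `B_i = δ_i(V₁, …, V_{h−1})`, extended by
`B₀ = 1` and `B_j = 0` for `j ≥ h`. -/
def bTuple (q : ℕ) (K : Type*) [Field K] (h : ℕ) : ℕ → MvPolynomial (ℕ ⊕ ℕ) K := fun j =>
  if j = 0 then 1 else if j ≤ h - 1 then deltaM q (vTuple K h) j else 0

/-- `Q₁` is `M(B₁, …, B_{h−1})` with its first row replaced by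
`(z₁B₁, z₂B₂, …, z_{h−1}B_{h−1}, 0)`. -/
def matQ₁ (q : ℕ) (K : Type*) [Field K] (h : ℕ) :
    Matrix (Fin h) (Fin h) (MvPolynomial (ℕ ⊕ ℕ) K) :=
  Matrix.of fun a b =>
    if (a : ℕ) = 0 then
      (if (b : ℕ) + 1 ≤ h - 1 then zVar K ((b : ℕ) + 1) * bTuple q K h ((b : ℕ) + 1) else 0)
    else entryM q (bTuple q K h) a b

/-- `Q₂` is `M(V₁, …, V_{h−1})` with its `h`-th column replaced by the column whose first
entry is `0` and whose `i`-th entry is `z_{i−1}V_{h−i+1}^{q^{i−1}}` for `2 ≤ i ≤ h`. -/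
def matQ₂ (q : ℕ) (K : Type*) [Field K] (h : ℕ) :
    Matrix (Fin h) (Fin h) (MvPolynomial (ℕ ⊕ ℕ) K) :=
  Matrix.of fun a b =>
    if (b : ℕ) = h - 1 then
      (if (a : ℕ) = 0 then 0
       else zVar K (a : ℕ) * vTuple K h (h - (a : ℕ)) ^ q ^ (a : ℕ))
    else entryM q (vTuple K h) a b

namespace DetAux
variable {R : Type*} [CommRing R]

lemma entryM_of_le (q : ℕ) (W : ℕ → R) {a b : ℕ} (h : a ≤ b + 1) :
    entryM q W a b = W (b + 1 - a) ^ q ^ a := if_pos h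

lemma entryM_of_gt (q : ℕ) (W : ℕ → R) {a b : ℕ} (h : b + 1 < a) : entryM q W a b = 0 :=
  if_neg (by omega)

lemma neg_one_pow_mul_self (k : ℕ) (x : R) : (-1) ^ k * ((-1) ^ k * x) = x := by
  rw [← mul_assoc, ← pow_add, Even.neg_one_pow ⟨k, rfl⟩, one_mul]

/-- The auxiliary matrix with duplicate first/last columns. -/
def Emat (q : ℕ) (V : ℕ → R) (m : ℕ) : Matrix (Fin (m+1)) (Fin (m+1)) R :=
  Matrix.of fun r c => if (c : ℕ) = 0 then V (m - (r : ℕ)) ^ q ^ (r : ℕ)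
    else entryM q V (r : ℕ) ((c : ℕ) - 1)

lemma det_Emat_minor (q : ℕ) (V : ℕ → R) (hV0 : V 0 = 1) (m : ℕ) (a : Fin (m+1)) :
    ((Emat q V m).submatrix a.succAbove Fin.succ).det = (-1) ^ (a : ℕ) * deltaM q V a := by
  set k := (a : ℕ) with hk
  have hka : k ≤ m := Nat.lt_succ_iff.mp a.isLt
  have hval : ∀ r : Fin m, ((a.succAbove r : Fin (m+1)) : ℕ)
      = if (r : ℕ) < k then (r : ℕ) else (r : ℕ) + 1 := by
    intro r
    rcases lt_or_ge ((r : ℕ)) k with h | h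
    · rw [Fin.succAbove_of_castSucc_lt _ _ (by simpa [Fin.lt_iff_val_lt_val] using h)]
      simp [h]
    · rw [Fin.succAbove_of_le_castSucc _ _ (by simpa [Fin.le_iff_val_le_val] using h)]
      simp [Nat.not_lt.mpr h]
  let e : Fin k ⊕ Fin (m - k) ≃ Fin m := finSumFinEquiv.trans (finCongr (by omega))
  have he1 : ∀ i : Fin k, ((e (Sum.inl i) : Fin m) : ℕ) = (i : ℕ) := by
    intro i; simp [e]
  have he2 : ∀ j : Fin (m - k), ((e (Sum.inr j) : Fin m) : ℕ) = k + (j : ℕ) := by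
    intro j; simp [e]
  rw [← Matrix.det_submatrix_equiv_self e]
  have hblock : ((Emat q V m).submatrix a.succAbove Fin.succ).submatrix e e =
      Matrix.fromBlocks
        (Matrix.of fun i j : Fin k => entryM q V (i : ℕ) (j : ℕ))
        (Matrix.of fun (i : Fin k) (j : Fin (m-k)) => entryM q V (i : ℕ) (k + (j : ℕ)))
        0
        (Matrix.of fun i j : Fin (m-k) => entryM q V (k + (i : ℕ) + 1) (k + (j : ℕ))) := by
    ext i j
    have hE : ∀ (r c : Fin m),
        Emat q V m (a.succAbove r) c.succ
          = entryM q V ((a.succAbove r : Fin (m+1)) : ℕ) (c : ℕ) := by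
      intro r c
      simp only [Emat, Matrix.of_apply, Fin.val_succ]
      rw [if_neg (by omega)]
      simp
    cases i with
    | inl i =>
      cases j with
      | inl j =>
        simp only [Matrix.submatrix_apply, Matrix.fromBlocks_apply₁₁, Matrix.of_apply]
        rw [hE, hval]; simp only [he1]; rw [if_pos i.isLt]
      | inr j =>
        simp only [Matrix.submatrix_apply, Matrix.fromBlocks_apply₁₂, Matrix.of_apply]
        rw [hE, hval]; simp only [he1, he2]; rw [if_pos i.isLt]
    | inr i =>
      cases j with
      | inl j =>
        simp only [Matrix.submatrix_apply, Matrix.fromBlocks_apply₂₁, Matrix.zero_apply]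
        rw [hE, hval]; simp only [he1, he2]; rw [if_neg (by omega)]
        exact entryM_of_gt _ _ (by have := j.isLt; omega)
      | inr j =>
        simp only [Matrix.submatrix_apply, Matrix.fromBlocks_apply₂₂, Matrix.of_apply]
        rw [hE, hval]; simp only [he2]; rw [if_neg (by omega)]
  rw [hblock, Matrix.det_fromBlocks_zero₂₁]
  have hD : (Matrix.of fun i j : Fin (m-k) => entryM q V (k + (i : ℕ) + 1) (k + (j : ℕ))).det = 1 := by
    rw [Matrix.det_of_upperTriangular]
    · apply Finset.prod_eq_one
      intro i _
      simp only [Matrix.of_apply]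
      rw [entryM_of_le _ _ (by omega)]
      rw [show k + (i:ℕ) + 1 - (k + (i:ℕ) + 1) = 0 from by omega]
      · simp [hV0]
    · intro i j hij
      simp only [Matrix.of_apply]
      exact entryM_of_gt _ _ (by simp only [id] at hij; omega)
  rw [hD, mul_one, deltaM, neg_one_pow_mul_self]

lemma key_relation (q : ℕ) (V : ℕ → R) (hV0 : V 0 = 1) {m : ℕ} (hm : 1 ≤ m) :
    ∑ t ∈ Finset.range (m + 1), deltaM q V t * V (m - t) ^ q ^ t = 0 := by
  obtain ⟨n, rfl⟩ : ∃ n, m = n + 1 := ⟨m - 1, by omega⟩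
  have hdup : (Emat q V (n+1)).det = 0 := by
    apply Matrix.det_zero_of_column_eq (i := (0 : Fin (n+2))) (j := Fin.last (n+1))
    · simp [Fin.ext_iff]
    · intro r
      simp only [Emat, Matrix.of_apply, Fin.val_zero, Fin.val_last]
      rw [if_pos trivial, if_neg (by omega), entryM_of_le _ _ (by omega)]
      have : n + 1 - 1 + 1 - (r:ℕ) = n + 1 - (r:ℕ) := by omega
      rw [this]
  have hexp := Matrix.det_succ_column_zero (Emat q V (n+1))
  rw [hdup] at hexp
  have hterm : ∀ a : Fin (n+2), (-1 : R) ^ (a : ℕ) * (Emat q V (n+1)) a 0 *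
      ((Emat q V (n+1)).submatrix a.succAbove Fin.succ).det
      = deltaM q V (a : ℕ) * V (n + 1 - (a : ℕ)) ^ q ^ (a : ℕ) := by
    intro a
    rw [det_Emat_minor q V hV0]
    simp only [Emat, Matrix.of_apply, Fin.val_zero, if_pos trivial]
    calc (-1 : R) ^ (a:ℕ) * V (n + 1 - (a:ℕ)) ^ q ^ (a:ℕ) * ((-1) ^ (a:ℕ) * deltaM q V (a:ℕ))
        = (-1 : R) ^ (a:ℕ) * ((-1) ^ (a:ℕ) *
            (deltaM q V (a:ℕ) * V (n + 1 - (a:ℕ)) ^ q ^ (a:ℕ))) := by ring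
      _ = deltaM q V (a:ℕ) * V (n + 1 - (a:ℕ)) ^ q ^ (a:ℕ) := neg_one_pow_mul_self _ _
  rw [Finset.sum_congr rfl (fun a _ => hterm a)] at hexp
  rw [← Fin.sum_univ_eq_sum_range (fun t => deltaM q V t * V (n + 1 - t) ^ q ^ t) (n+2)]
  exact hexp.symm




section Umat
variable {R : Type*} [CommRing R]

/-- Upper-triangular matrix of a tuple, with Frobenius twists shifted by `s`. -/
def Umat (q s : ℕ) (W : ℕ → R) (h : ℕ) : Matrix (Fin h) (Fin h) R :=
  Matrix.of fun a b =>
    if (a : ℕ) ≤ (b : ℕ) then W ((b : ℕ) - (a : ℕ)) ^ q ^ ((a : ℕ) + s) else 0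

lemma det_Umat (q s : ℕ) (W : ℕ → R) (h : ℕ) (hW0 : W 0 = 1) : (Umat q s W h).det = 1 := by
  rw [Matrix.det_of_upperTriangular]
  · apply Finset.prod_eq_one
    intro i _
    simp [Umat, hW0]
  · intro i j hij
    simp only [id] at hij
    exact if_neg (by exact_mod_cast Nat.not_le.mpr hij)

end Umat

section Tuples
variable (q : ℕ) (K : Type*) [Field K] (h : ℕ)

lemma vTuple_zero : vTuple K h 0 = 1 := rfl
lemma bTuple_zero : bTuple q K h 0 = 1 := rfl

lemma bTuple_eq_deltaM {j : ℕ} (hj : j ≤ h - 1) : bTuple q K h j = deltaM q (vTuple K h) j := by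
  unfold bTuple
  rcases Nat.eq_zero_or_pos j with rfl | hj0
  · simp [deltaM]
  · rw [if_neg (by omega), if_pos hj]

lemma tuple_relation {m : ℕ} (hm : 1 ≤ m) (hmh : m ≤ h - 1) :
    ∑ t ∈ Finset.range (m + 1), bTuple q K h t * vTuple K h (m - t) ^ q ^ t = 0 := by
  rw [Finset.sum_congr rfl (fun t ht => by
    rw [bTuple_eq_deltaM q K h (le_trans (Nat.lt_succ_iff.mp (Finset.mem_range.mp ht)) hmh)])]
  exact key_relation q (vTuple K h) rfl hm

end Tuples

lemma frob_pow {R : Type*} [CommSemiring R] (p e : ℕ) (x : R) (t n : ℕ) :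
    (x ^ (p ^ e) ^ t) ^ p ^ (e * n) = x ^ (p ^ e) ^ (t + n) := by
  rw [← pow_mul]
  congr 1
  rw [← pow_mul, ← pow_mul, ← pow_add, ← Nat.mul_add]

section Mul
variable (p e q : ℕ) (K : Type*) [Field K] (h : ℕ)

lemma Umat_mul [CharP K p] (hp : p.Prime) (hq : q = p ^ e) (s : ℕ) (hh : 1 ≤ h) :
    Umat q s (bTuple q K h) h * Umat q s (vTuple K h) h = 1 := by
  haveI : Fact p.Prime := ⟨hp⟩
  set R := MvPolynomial (ℕ ⊕ ℕ) K
  refine Matrix.ext fun a c => ?_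
  rw [Matrix.mul_apply]
  by_cases hac : (a : ℕ) ≤ (c : ℕ)
  · -- main case
    set φ : R →+* R := iterateFrobenius R p (e * ((a : ℕ) + s)) with hφ
    have hterm : ∀ b : Fin h, Umat q s (bTuple q K h) h a b * Umat q s (vTuple K h) h b c
        = if (a : ℕ) ≤ (b : ℕ) ∧ (b : ℕ) ≤ (c : ℕ) then
            φ (bTuple q K h ((b : ℕ) - (a : ℕ)) *
              vTuple K h ((c : ℕ) - (b : ℕ)) ^ q ^ ((b : ℕ) - (a : ℕ))) else 0 := by
      intro b
      simp only [Umat, Matrix.of_apply]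
      by_cases h1 : (a : ℕ) ≤ (b : ℕ)
      · by_cases h2 : (b : ℕ) ≤ (c : ℕ)
        · rw [if_pos h1, if_pos h2, if_pos ⟨h1, h2⟩, hφ, iterateFrobenius_def, mul_pow]
          congr 1
          · rw [hq, ← pow_mul]
          · rw [hq, frob_pow p e]
            congr 2
            omega
        · rw [if_pos h1, if_neg h2,
            if_neg (show ¬((a:ℕ) ≤ (b:ℕ) ∧ (b:ℕ) ≤ (c:ℕ)) from fun hc => h2 hc.2), mul_zero]
      · rw [if_neg h1,
            if_neg (show ¬((a:ℕ) ≤ (b:ℕ) ∧ (b:ℕ) ≤ (c:ℕ)) from fun hc => h1 hc.1), zero_mul]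
    rw [Finset.sum_congr rfl fun b _ => hterm b]
    rw [Fin.sum_univ_eq_sum_range (fun b => if (a : ℕ) ≤ b ∧ b ≤ (c : ℕ) then
      φ (bTuple q K h (b - (a : ℕ)) * vTuple K h ((c : ℕ) - b) ^ q ^ (b - (a : ℕ))) else 0) h]
    rw [← Finset.sum_filter]
    have hfil : (Finset.range h).filter (fun b => (a : ℕ) ≤ b ∧ b ≤ (c : ℕ))
        = Finset.Icc (a : ℕ) (c : ℕ) := by
      ext x
      simp only [Finset.mem_filter, Finset.mem_range, Finset.mem_Icc]
      have := c.isLt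
      omega
    rw [hfil, ← Finset.Ico_add_one_right_eq_Icc, Finset.sum_Ico_eq_sum_range]
    have hrange : (c : ℕ) + 1 - (a : ℕ) = ((c : ℕ) - (a : ℕ)) + 1 := by omega
    rw [hrange]
    have hsum : ∑ t ∈ Finset.range (((c:ℕ) - (a:ℕ)) + 1),
        φ (bTuple q K h ((a:ℕ) + t - (a:ℕ)) *
          vTuple K h ((c:ℕ) - ((a:ℕ) + t)) ^ q ^ ((a:ℕ) + t - (a:ℕ)))
        = φ (∑ t ∈ Finset.range (((c:ℕ) - (a:ℕ)) + 1),
            bTuple q K h t * vTuple K h (((c:ℕ) - (a:ℕ)) - t) ^ q ^ t) := by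
      rw [map_sum]
      apply Finset.sum_congr rfl
      intro t _
      have h1 : (a:ℕ) + t - (a:ℕ) = t := by omega
      have h2 : (c:ℕ) - ((a:ℕ) + t) = ((c:ℕ) - (a:ℕ)) - t := by omega
      rw [h1, h2]
    rw [hsum]
    rcases eq_or_lt_of_le hac with heq | hlt
    · have : a = c := Fin.ext heq
      subst this
      rw [Matrix.one_apply_eq]
      simp [bTuple_zero, vTuple_zero, map_one]
    · have hm1 : 1 ≤ (c:ℕ) - (a:ℕ) := by omega
      have hm2 : (c:ℕ) - (a:ℕ) ≤ h - 1 := by have := c.isLt; omega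
      rw [tuple_relation q K h hm1 hm2, map_zero,
        Matrix.one_apply_ne (fun hcon => absurd (congrArg Fin.val hcon) (by omega))]
  · rw [Matrix.one_apply_ne (fun hcon => hac (le_of_eq (congrArg Fin.val hcon)))]
    apply Finset.sum_eq_zero
    intro b _
    simp only [Umat, Matrix.of_apply]
    by_cases h1 : (a : ℕ) ≤ (b : ℕ)
    · rw [if_pos h1, if_neg (by omega), mul_zero]
    · rw [if_neg h1, zero_mul]

end Mul
lemma neg_one_pow_mul_self' {R : Type*} [CommRing R] (k : ℕ) (x : R) :
    (-1) ^ k * ((-1) ^ k * x) = x := by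
  rw [← mul_assoc, ← pow_add, Even.neg_one_pow ⟨k, rfl⟩, one_mul]

section Main
variable (p e q : ℕ) (K : Type*) [Field K] [CharP K p]

lemma adjugate_Umat (hp : p.Prime) (hq : q = p ^ e) (h s : ℕ) (hh : 1 ≤ h) :
    Matrix.adjugate (Umat q s (bTuple q K h) h) = Umat q s (vTuple K h) h := by
  have hmul := Umat_mul p e q K h hp hq s hh
  have hdet : (Umat q s (bTuple q K h) h).det = 1 := det_Umat q s _ h rfl
  calc Matrix.adjugate (Umat q s (bTuple q K h) h)
      = Matrix.adjugate (Umat q s (bTuple q K h) h) *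
        (Umat q s (bTuple q K h) h * Umat q s (vTuple K h) h) := by rw [hmul, Matrix.mul_one]
    _ = (Matrix.adjugate (Umat q s (bTuple q K h) h) * Umat q s (bTuple q K h) h) *
        Umat q s (vTuple K h) h := by rw [Matrix.mul_assoc]
    _ = Umat q s (vTuple K h) h := by
        rw [Matrix.adjugate_mul, hdet, one_smul, Matrix.one_mul]

lemma det_matQ₁ (hp : p.Prime) (hq : q = p ^ e) (n : ℕ) (hn : 1 ≤ n) :
    (matQ₁ q K (n+1)).det = (-1) ^ n *
      ∑ i ∈ Finset.Ico 1 (n+1),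
        zVar K i * bTuple q K (n+1) i * vTuple K (n+1) (n+1-i) ^ q ^ i := by
  rw [Matrix.det_succ_row_zero]
  have hsub : ∀ j : Fin (n+1), (matQ₁ q K (n+1)).submatrix Fin.succ j.succAbove
      = (Umat q 1 (bTuple q K (n+1)) (n+1)).submatrix Fin.castSucc j.succAbove := by
    intro j
    refine Matrix.ext fun r c => ?_
    simp only [Matrix.submatrix_apply, matQ₁, Matrix.of_apply, Umat, Fin.val_succ,
      Fin.coe_castSucc]
    rw [if_neg (by omega)]
    unfold entryM
    by_cases hrc : (r : ℕ) ≤ ((j.succAbove c : Fin (n+1)) : ℕ)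
    · rw [if_pos (by omega), if_pos hrc]
      have h1 : ((j.succAbove c : Fin (n+1)) : ℕ) + 1 - ((r : ℕ) + 1)
          = ((j.succAbove c : Fin (n+1)) : ℕ) - (r : ℕ) := by omega
      rw [h1]
    · rw [if_neg (by omega), if_neg hrc]
  have hadj := adjugate_Umat p e q K hp hq (n+1) 1 (by omega)
  have hminor : ∀ j : Fin (n+1),
      ((Umat q 1 (bTuple q K (n+1)) (n+1)).submatrix Fin.castSucc j.succAbove).det
      = (-1) ^ (n + (j : ℕ)) * vTuple K (n+1) (n - (j : ℕ)) ^ q ^ ((j : ℕ) + 1) := by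
    intro j
    have hth := Matrix.adjugate_fin_succ_eq_det_submatrix
      (Umat q 1 (bTuple q K (n+1)) (n+1)) j (Fin.last n)
    rw [Fin.succAbove_last, hadj] at hth
    have hUV : Umat q 1 (vTuple K (n+1)) (n+1) j (Fin.last n)
        = vTuple K (n+1) (n - (j : ℕ)) ^ q ^ ((j : ℕ) + 1) := by
      simp only [Umat, Matrix.of_apply, Fin.val_last]
      rw [if_pos (by omega)]
    simp only [Fin.val_last] at hth
    calc ((Umat q 1 (bTuple q K (n+1)) (n+1)).submatrix Fin.castSucc j.succAbove).det
        = (-1) ^ (n + (j : ℕ)) * ((-1) ^ (n + (j : ℕ)) *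
            ((Umat q 1 (bTuple q K (n+1)) (n+1)).submatrix Fin.castSucc j.succAbove).det) := by
          rw [neg_one_pow_mul_self']
      _ = (-1) ^ (n + (j : ℕ)) * vTuple K (n+1) (n - (j : ℕ)) ^ q ^ ((j : ℕ) + 1) := by
          rw [← hth, hUV]
  have hrow0 : ∀ j : Fin (n+1), matQ₁ q K (n+1) 0 j
      = if (j : ℕ) + 1 ≤ n then zVar K ((j : ℕ) + 1) * bTuple q K (n+1) ((j : ℕ) + 1) else 0 := by
    intro j
    simp only [matQ₁, Matrix.of_apply, Fin.val_zero, if_pos trivial, Nat.add_sub_cancel]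
  have hterm : ∀ j : Fin (n+1),
      (-1 : MvPolynomial (ℕ ⊕ ℕ) K) ^ (j : ℕ) * matQ₁ q K (n+1) 0 j *
        ((matQ₁ q K (n+1)).submatrix Fin.succ j.succAbove).det
      = if (j : ℕ) + 1 ≤ n then
          (-1) ^ n * (zVar K ((j : ℕ) + 1) * bTuple q K (n+1) ((j : ℕ) + 1) *
            vTuple K (n+1) (n + 1 - ((j : ℕ) + 1)) ^ q ^ ((j : ℕ) + 1)) else 0 := by
    intro j
    rw [hsub, hminor, hrow0]
    by_cases hj : (j : ℕ) + 1 ≤ n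
    · rw [if_pos hj, if_pos hj]
      have h2 : n + 1 - ((j : ℕ) + 1) = n - (j : ℕ) := by omega
      rw [h2]
      calc (-1 : MvPolynomial (ℕ ⊕ ℕ) K) ^ (j : ℕ) *
            (zVar K ((j : ℕ) + 1) * bTuple q K (n+1) ((j : ℕ) + 1)) *
            ((-1) ^ (n + (j : ℕ)) * vTuple K (n+1) (n - (j : ℕ)) ^ q ^ ((j : ℕ) + 1))
          = ((-1) ^ (j : ℕ) * (-1) ^ (j : ℕ)) * ((-1) ^ n *
              (zVar K ((j : ℕ) + 1) * bTuple q K (n+1) ((j : ℕ) + 1) *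
                vTuple K (n+1) (n - (j : ℕ)) ^ q ^ ((j : ℕ) + 1))) := by
            rw [pow_add]; ring
        _ = _ := by rw [← pow_add, Even.neg_one_pow ⟨(j : ℕ), rfl⟩, one_mul]
    · rw [if_neg hj, if_neg hj, mul_zero, zero_mul]
  rw [Finset.sum_congr rfl fun j _ => hterm j]
  rw [Fin.sum_univ_eq_sum_range (fun j => if j + 1 ≤ n then
    (-1 : MvPolynomial (ℕ ⊕ ℕ) K) ^ n * (zVar K (j + 1) * bTuple q K (n+1) (j + 1) *
      vTuple K (n+1) (n + 1 - (j + 1)) ^ q ^ (j + 1)) else 0) (n+1)]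
  rw [Finset.sum_range_succ, if_neg (by omega), add_zero]
  rw [Finset.sum_congr rfl (fun j hj => if_pos (by
    have := Finset.mem_range.mp hj; omega))]
  rw [← Finset.mul_sum]
  congr 1
  rw [Finset.sum_Ico_eq_sum_range]
  have : n + 1 - 1 = n := by omega
  rw [this]
  apply Finset.sum_congr rfl
  intro j _
  have h1 : 1 + j = j + 1 := by omega
  rw [h1]

end Main
lemma det_matQ₂ (p e q : ℕ) (K : Type*) [Field K] [CharP K p] (hp : p.Prime) (hq : q = p ^ e)
    (n : ℕ) (hn : 1 ≤ n) :
    (matQ₂ q K (n+1)).det = (-1) ^ n *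
      ∑ i ∈ Finset.Ico 1 (n+1),
        zVar K i * bTuple q K (n+1) i * vTuple K (n+1) (n+1-i) ^ q ^ i := by
  set R := MvPolynomial (ℕ ⊕ ℕ) K
  set UB := Umat q 0 (bTuple q K (n+1)) (n+1) with hUB
  have hdetUB : UB.det = 1 := det_Umat q 0 _ (n+1) rfl
  have hQ2 : (matQ₂ q K (n+1)).det = (UB * matQ₂ q K (n+1)).det := by
    rw [Matrix.det_mul, hdetUB, one_mul]
  set P := UB * matQ₂ q K (n+1) with hP
  -- entries of P
  have hPoff : ∀ (a c : Fin (n+1)), (c : ℕ) ≠ n →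
      P a c = if (a : ℕ) = (c : ℕ) + 1 then 1 else 0 := by
    intro a c hc
    have hc' : (c : ℕ) < n := by have := c.isLt; omega
    have hmul := Umat_mul p e q K (n+1) hp hq 0 (by omega)
    have hone := congrFun (congrFun hmul a) (⟨(c : ℕ) + 1, by omega⟩ : Fin (n+1))
    rw [Matrix.mul_apply] at hone
    rw [hP, Matrix.mul_apply]
    calc ∑ b : Fin (n+1), UB a b * matQ₂ q K (n+1) b c
        = ∑ b : Fin (n+1), Umat q 0 (bTuple q K (n+1)) (n+1) a b *
            Umat q 0 (vTuple K (n+1)) (n+1) b ⟨(c : ℕ) + 1, by omega⟩ := by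
          apply Finset.sum_congr rfl
          intro b _
          congr 1
          simp only [matQ₂, Matrix.of_apply, Umat, Nat.add_sub_cancel]
          rw [if_neg hc]
          unfold entryM
          by_cases hbc : (b : ℕ) ≤ (c : ℕ) + 1
          · rw [if_pos hbc, if_pos hbc, add_zero]
          · rw [if_neg hbc, if_neg hbc]
      _ = (1 : Matrix (Fin (n+1)) (Fin (n+1)) R) a ⟨(c : ℕ) + 1, by omega⟩ := hone
      _ = if (a : ℕ) = (c : ℕ) + 1 then 1 else 0 := by
          rw [Matrix.one_apply]
          by_cases hac : (a : ℕ) = (c : ℕ) + 1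
          · rw [if_pos (Fin.ext hac), if_pos hac]
          · rw [if_neg (fun hcon => hac (congrArg Fin.val hcon)), if_neg hac]
  have hPlast : ∀ a : Fin (n+1), (a : ℕ) = 0 →
      P a (Fin.last n) = ∑ b : Fin (n+1),
        (if (b : ℕ) = 0 then 0
          else zVar K (b : ℕ) * bTuple q K (n+1) (b : ℕ) *
            vTuple K (n+1) (n + 1 - (b : ℕ)) ^ q ^ (b : ℕ)) := by
    intro a ha
    rw [hP, Matrix.mul_apply]
    apply Finset.sum_congr rfl
    intro b _
    simp only [matQ₂, Matrix.of_apply, Umat, Fin.val_last, Nat.add_sub_cancel, hUB]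
    rw [ha, if_pos (Nat.zero_le _), if_pos trivial]
    by_cases hb : (b : ℕ) = 0
    · rw [if_pos hb, if_pos hb, mul_zero]
    · rw [if_neg hb, if_neg hb]
      have h1 : (b : ℕ) - 0 = (b : ℕ) := by omega
      have h2 : q ^ (0 + 0) = 1 := by norm_num
      rw [h1, h2, pow_one]
      ring
  -- now the permutation trick
  set σ := finRotate (n+1) with hσ
  have hperm := Matrix.det_permute σ P
  have hMtri : (Matrix.of fun i j => P (σ i) j).det
      = P (σ (Fin.last n)) (Fin.last n) := by
    rw [Matrix.det_of_upperTriangular]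
    · rw [Fin.prod_univ_castSucc]
      have h1 : ∀ i : Fin n, (Matrix.of fun i j => P (σ i) j) i.castSucc i.castSucc = 1 := by
        intro i
        simp only [Matrix.of_apply]
        rw [hPoff _ _ (by simp [Fin.coe_castSucc]; omega)]
        rw [if_pos (by rw [hσ, finRotate_succ_apply, Fin.val_add_one_of_lt (by
          rw [Fin.lt_iff_val_lt_val, Fin.val_last, Fin.coe_castSucc]; exact i.isLt)])]
      rw [Finset.prod_congr rfl (fun i _ => h1 i), Finset.prod_const_one, one_mul]
      simp only [Matrix.of_apply]
    · intro i j hij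
      simp only [Matrix.of_apply, id] at hij ⊢
      have hjn : (j : ℕ) ≠ n := by have := i.isLt; omega
      rw [hPoff _ _ hjn]
      rw [if_neg (by
        rw [hσ, finRotate_succ_apply]
        rcases Nat.lt_or_ge ((i : ℕ) + 1) (n + 1) with hlt | hge
        · rw [Fin.val_add_one_of_lt (by rw [Fin.lt_iff_val_lt_val, Fin.val_last]; omega)]
          omega
        · have : (i : ℕ) = n := by have := i.isLt; omega
          have hil : i = Fin.last n := Fin.ext this
          rw [hil, Fin.last_add_one]
          simp only [Fin.val_zero]
          omega)]
  have hσlast : σ (Fin.last n) = 0 := by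
    rw [hσ, finRotate_succ_apply, Fin.last_add_one]
  have hsign : ((Equiv.Perm.sign σ : ℤ) : R) = (-1) ^ n := by
    rw [hσ, sign_finRotate]
    push_cast
    ring
  have hperm' : (Matrix.of fun i j => P (σ i) j).det = (-1 : R) ^ n * P.det := by
    have := Matrix.det_permute σ P
    rw [← hsign]
    exact this
  have hsum : P (0 : Fin (n+1)) (Fin.last n)
      = ∑ i ∈ Finset.Ico 1 (n+1),
          zVar K i * bTuple q K (n+1) i * vTuple K (n+1) (n+1-i) ^ q ^ i := by
    rw [hPlast 0 rfl]
    rw [Fin.sum_univ_eq_sum_range (fun b => if b = 0 then 0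
      else zVar K b * bTuple q K (n+1) b * vTuple K (n+1) (n + 1 - b) ^ q ^ b) (n+1)]
    rw [Finset.range_eq_Ico, Finset.sum_eq_sum_Ico_succ_bot (by omega)]
    rw [if_pos rfl, zero_add]
    apply Finset.sum_congr rfl
    intro i hi
    rw [if_neg (by have := (Finset.mem_Ico.mp hi).1; omega)]
  calc (matQ₂ q K (n+1)).det = P.det := hQ2
    _ = (-1) ^ n * ((-1) ^ n * P.det) := (neg_one_pow_mul_self' n _).symm
    _ = (-1) ^ n * (Matrix.of fun i j => P (σ i) j).det := by rw [hperm']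
    _ = (-1) ^ n * P (σ (Fin.last n)) (Fin.last n) := by rw [hMtri]
    _ = _ := by rw [hσlast, hsum]

end DetAux

open DetAux in
/-- `det Q₁ = det Q₂ = (−1)^{h−1} Σ_{i=1}^{h−1} z_i B_i V_{h−i}^{q^i}`. -/
theorem det_matQ₁_eq_det_matQ₂
    (p e q h : ℕ) (hp : p.Prime) (he : 1 ≤ e) (hq : q = p ^ e) (hh : 2 ≤ h)
    (K : Type*) [Field K] [Fintype K] (hK : Fintype.card K = q) :
    Matrix.det (matQ₁ q K h) = Matrix.det (matQ₂ q K h) ∧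
    Matrix.det (matQ₂ q K h)
      = (-1) ^ (h - 1) *
        ∑ i ∈ Finset.Ico 1 h,
          zVar K i * bTuple q K h i * vTuple K h (h - i) ^ q ^ i := by
  -- derive CharP K p
  haveI : CharP K (ringChar K) := ringChar.charP K
  obtain ⟨m, hmp, hcard⟩ := FiniteField.card K (ringChar K)
  have hpr : p = ringChar K := by
    have h1 : p ∣ (ringChar K) ^ (m : ℕ) := by
      rw [← hcard, hK, hq]
      exact dvd_pow_self p (by omega)
    have h2 : p ∣ ringChar K := hp.dvd_of_dvd_pow h1
    exact ((Nat.prime_dvd_prime_iff_eq hp hmp).mp h2)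
  haveI : CharP K p := by rw [hpr]; infer_instance
  obtain ⟨n, rfl⟩ : ∃ n, h = n + 1 := ⟨h - 1, by omega⟩
  have hn : 1 ≤ n := by omega
  have hd1 := DetAux.det_matQ₁ p e q K hp hq n hn
  have hd2 := DetAux.det_matQ₂ p e q K hp hq n hn
  have hns : n + 1 - 1 = n := by omega
  rw [hns]
  exact ⟨hd1.trans hd2.symm, hd2⟩
end
end

section
/- For every γ ∈ F_{q^h}, the F_{q^h}-algebra automorphism σ_γ of F_{q^h}[V_1, …, V_h] determined by σ_γ(V_i) = V_i for 1 ≤ i ≤ h−1 and σ_γ(V_h) = V_h + γ satisfies σ_γ(D) = D; hence γ ↦ σ_γ defines an action of the additive group (F_{q^h}, +) on F_{q^h}[V_1, …, V_h]/(D) by F_{q^h}-algebra automorphisms. -/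
open Finset

noncomputable section

/-- The `h×h` matrix whose first row is `(V₁^{q^h} − V₁, …, V_h^{q^h} − V_h)` and whose
`(i,j)` entry for `2 ≤ i ≤ h` is `V_{j−i+1}^{q^{i−1}}` (conventions `V₀ = 1`, `V_j = 0`
for `j < 0`); here the variable `V_j` is indexed by `j − 1 : Fin h`. -/
def matD (q h : ℕ) (K : Type*) [Field K] :
    Matrix (Fin h) (Fin h) (MvPolynomial (Fin h) K) :=
  Matrix.of fun a b =>
    if (a : ℕ) = 0 then MvPolynomial.X b ^ q ^ h - MvPolynomial.X b
    else if (a : ℕ) ≤ (b : ℕ) then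
      MvPolynomial.X (⟨(b : ℕ) - (a : ℕ), lt_of_le_of_lt (Nat.sub_le _ _) b.isLt⟩ : Fin h)
        ^ q ^ (a : ℕ)
    else if (a : ℕ) = (b : ℕ) + 1 then 1 else 0

/-- `D ∈ F_{q^h}[V₁, …, V_h]` is the determinant of the matrix above. -/
def Dpoly (q h : ℕ) (K : Type*) [Field K] : MvPolynomial (Fin h) K :=
  Matrix.det (matD q h K)

/-- The `F_{q^h}`-algebra endomorphism `σ_γ` of `F_{q^h}[V₁, …, V_h]` with
`σ_γ(V_i) = V_i` for `1 ≤ i ≤ h−1` and `σ_γ(V_h) = V_h + γ`. -/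
def σγ (h : ℕ) (K : Type*) [Field K] (γ : K) :
    MvPolynomial (Fin h) K →ₐ[K] MvPolynomial (Fin h) K :=
  MvPolynomial.aeval fun i : Fin h =>
    if (i : ℕ) = h - 1 then MvPolynomial.X i + MvPolynomial.C γ else MvPolynomial.X i

/-- For every `γ ∈ F_{q^h}`, `σ_γ(D) = D`; moreover `γ ↦ σ_γ` defines an action of the
additive group `(F_{q^h}, +)` by `F_{q^h}`-algebra automorphisms, hence it descends to an
action on `F_{q^h}[V₁, …, V_h]/(D)`. -/
theorem sigma_preserves_Dpoly
    (p e q h : ℕ) (hp : p.Prime) (he : 1 ≤ e) (hq : q = p ^ e) (hh : 1 ≤ h)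
    (K : Type*) [Field K] [Fintype K] (hK : Fintype.card K = q ^ h) :
    (∀ γ : K, σγ h K γ (Dpoly q h K) = Dpoly q h K)
    ∧ (∀ γ γ' : K, ∀ f : MvPolynomial (Fin h) K, σγ h K γ (σγ h K γ' f) = σγ h K (γ + γ') f)
    ∧ (∀ f : MvPolynomial (Fin h) K, σγ h K 0 f = f) := by

  -- Basic character/cardinality facts
  have hcard : Fintype.card K = ringChar K ^ ((FiniteField.card K (ringChar K)).choose : ℕ) := by
    have h := (FiniteField.card K (ringChar K)).choose_spec
    exact_mod_cast h.2
  haveI : Fact (Nat.Prime (ringChar K)) :=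
    ⟨(FiniteField.card K (ringChar K)).choose_spec.1⟩
  have hfrob : ∀ γ : K, (MvPolynomial.X (⟨h - 1, by omega⟩ : Fin h) + MvPolynomial.C γ
      : MvPolynomial (Fin h) K) ^ q ^ h
      = MvPolynomial.X (⟨h - 1, by omega⟩ : Fin h) ^ q ^ h + MvPolynomial.C γ := by
    intro γ
    have hqh : q ^ h = ringChar K ^ ((FiniteField.card K (ringChar K)).choose : ℕ) := by
      rw [← hK]; exact hcard
    rw [hqh, add_pow_char_pow, ← map_pow, ← hqh, ← hK, FiniteField.pow_card]
  refine ⟨?_, ?_, ?_⟩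
  · intro γ
    have hmap : (σγ h K γ).mapMatrix (matD q h K) = matD q h K := by
      ext a b
      simp only [AlgHom.mapMatrix_apply, Matrix.map_apply, matD, Matrix.of_apply]
      split_ifs with h1 h2 h3
      · rw [map_sub, map_pow, σγ, MvPolynomial.aeval_X]
        split_ifs with hb
        · have hb' : b = (⟨h - 1, by omega⟩ : Fin h) := by
            apply Fin.ext; exact hb
          rw [hb', hfrob]; ring
        · rfl
      · rw [map_pow, σγ, MvPolynomial.aeval_X, if_neg]
        simp only []
        omega
      · simp
      · simp
    rw [Dpoly, AlgHom.map_det, hmap]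
  · intro γ γ' f
    have : (σγ h K γ).comp (σγ h K γ') = σγ h K (γ + γ') := by
      apply MvPolynomial.algHom_ext
      intro i
      simp only [AlgHom.comp_apply, σγ, MvPolynomial.aeval_X]
      split_ifs with hi
      · rw [map_add, MvPolynomial.aeval_X, MvPolynomial.aeval_C, if_pos hi,
          MvPolynomial.algebraMap_eq, map_add]
        ring
      · rw [MvPolynomial.aeval_X, if_neg hi]
    calc σγ h K γ (σγ h K γ' f) = ((σγ h K γ).comp (σγ h K γ')) f := rfl
      _ = σγ h K (γ + γ') f := by rw [this]
  · intro f
    have : σγ h K 0 = AlgHom.id K (MvPolynomial (Fin h) K) := by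
      apply MvPolynomial.algHom_ext
      intro i
      simp [σγ]
    rw [this]; rfl
end
end
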